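/- Let x₀ = √(N·Δb/(b·Δt)). If x₀ ≤ T̃ (and a²·Δb/(b·Δt) ≤ N ≤ (a + b·B̃)²·Δb/(b·Δt), so that the corresponding bandwidth is admissible), then the minimum of c over the feasible set F equals the unconstrained minimum 2·√(N·Δt·Δb/b) − a·Δb/b; if instead x₀ > T̃, then the constrained minimum of c over F is strictly larger than the unconstrained minimum 2·√(N·Δt·Δb/b) − a·Δb/b. -/

import Mathlib

/-!
On the constraint curve `a x + b x y = N` the bandwidth is `y = (N - a x)/(b x)`, so the cost is
`Δt x + (N Δb / b)/x - a Δb / b`. Completing the square,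
`p x + q/x - 2√(p q) = p (x - √(q/p))² / x`, shows that the cost exceeds the unconstrained minimum
by `Δt (x - x₀)² / x`. This excess vanishes exactly at `x = x₀`, which is feasible under the
bandwidth bounds when `x₀ ≤ T̃`, and is positive at every feasible `x ≤ T̃ < x₀`.
-/

/-- The feasible set
`F = {(x, y) : 0 < x ≤ T̃, 0 ≤ y ≤ B̃, a·x + b·x·y = N}`. -/
def feasibleSet (a b N T B : ℝ) : Set (ℝ × ℝ) :=
  {p : ℝ × ℝ | 0 < p.1 ∧ p.1 ≤ T ∧ 0 ≤ p.2 ∧ p.2 ≤ B ∧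
    a * p.1 + b * p.1 * p.2 = N}

/-- The resource-cost objective `c(x, y) = Δt·x + Δb·y`. -/
def resourceCost (Δt Δb : ℝ) (p : ℝ × ℝ) : ℝ :=
  Δt * p.1 + Δb * p.2

theorem mul_add_div_sub_two_sqrt_mul {p q x : ℝ} (hp : 0 < p) (hq : 0 ≤ q) (hx : x ≠ 0) :
    p * x + q / x - 2 * √(p * q) = p * (x - √(q / p)) ^ 2 / x := by
  set s := √(q / p)
  have hq_eq : q = p * s ^ 2 := by
    rw [Real.sq_sqrt (div_nonneg hq hp.le)]
    field_simp
  have hsqrt : √(p * q) = p * s := by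
    rw [hq_eq, show p * (p * s ^ 2) = (p * s) * (p * s) by ring,
      Real.sqrt_mul_self (mul_nonneg hp.le (Real.sqrt_nonneg _))]
  rw [hsqrt, hq_eq]
  field_simp
  ring

theorem mul_sqrt_mul_le_of_sq_mul_le {c k N : ℝ} (hk : 0 ≤ k) (hN : 0 ≤ N)
    (h : c ^ 2 * k ≤ N) : c * √(N * k) ≤ N := by
  have hsq : (c * √(N * k)) ^ 2 ≤ N ^ 2 := by
    rw [mul_pow, Real.sq_sqrt (mul_nonneg hN hk)]
    nlinarith
  exact (le_abs_self _).trans (abs_le_of_sq_le_sq hsq hN)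

theorem le_mul_sqrt_mul_of_le_sq_mul {c k N : ℝ} (hc : 0 ≤ c) (hk : 0 ≤ k) (hN : 0 ≤ N)
    (h : N ≤ c ^ 2 * k) : N ≤ c * √(N * k) := by
  have hsq : N ^ 2 ≤ (c * √(N * k)) ^ 2 := by
    rw [mul_pow, Real.sq_sqrt (mul_nonneg hN hk)]
    nlinarith
  exact (sq_le_sq₀ hN (by positivity)).1 hsq

section Feasible

variable {Δt Δb a b N T B : ℝ}

theorem mk_mem_feasibleSet {x : ℝ} (hb : 0 < b) (hx : 0 < x) (hxT : x ≤ T)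
    (hlow : a * x ≤ N) (hhigh : N ≤ (a + b * B) * x) :
    (x, (N - a * x) / (b * x)) ∈ feasibleSet a b N T B := by
  have hbx : 0 < b * x := mul_pos hb hx
  refine ⟨hx, hxT, div_nonneg (sub_nonneg.2 hlow) hbx.le, ?_, ?_⟩
  · rw [div_le_iff₀ hbx]
    linarith
  · field_simp
    ring

theorem resourceCost_sub_eq {p : ℝ × ℝ} (hp : p ∈ feasibleSet a b N T B)
    (hΔt : 0 < Δt) (hΔb : 0 ≤ Δb) (hb : 0 < b) (hN : 0 ≤ N) :
    resourceCost Δt Δb p - (2 * √(N * Δt * Δb / b) - a * Δb / b) =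
      Δt * (p.1 - √(N * Δb / (b * Δt))) ^ 2 / p.1 := by
  obtain ⟨hx, -, -, -, hcon⟩ := hp
  have hcost : resourceCost Δt Δb p = Δt * p.1 + N * Δb / b / p.1 - a * Δb / b := by
    unfold resourceCost
    field_simp
    linear_combination Δb * hcon
  have key := mul_add_div_sub_two_sqrt_mul hΔt (by positivity : 0 ≤ N * Δb / b) hx.ne'
  rw [div_div (N * Δb) b Δt, mul_div_assoc', show Δt * (N * Δb) = N * Δt * Δb by ring] at key
  rw [hcost, ← key]
  ring

end Feasible

theorem constrained_vs_unconstrained_minimum_general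
    (Δt Δb a b N T B : ℝ) (hΔt : 0 < Δt) (hΔb : 0 < Δb)
    (ha : 0 < a) (hb : 0 < b) (hN : 0 < N) (hB : 0 < B) :
    ((Real.sqrt (N * Δb / (b * Δt)) ≤ T →
      a ^ 2 * Δb / (b * Δt) ≤ N →
      N ≤ (a + b * B) ^ 2 * Δb / (b * Δt) →
      IsLeast (resourceCost Δt Δb '' feasibleSet a b N T B)
        (2 * Real.sqrt (N * Δt * Δb / b) - a * Δb / b)) ∧
     (T < Real.sqrt (N * Δb / (b * Δt)) →
      ∀ p ∈ feasibleSet a b N T B,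
        2 * Real.sqrt (N * Δt * Δb / b) - a * Δb / b
          < resourceCost Δt Δb p)) := by
  set x₀ := √(N * Δb / (b * Δt)) with hx₀
  have excess : ∀ p ∈ feasibleSet a b N T B,
      resourceCost Δt Δb p - (2 * √(N * Δt * Δb / b) - a * Δb / b) = Δt * (p.1 - x₀) ^ 2 / p.1 :=
    fun p hp ↦ resourceCost_sub_eq hp hΔt hΔb.le hb hN.le
  refine ⟨fun hx₀T hlow hhigh ↦ ⟨?_, ?_⟩, fun hTx₀ p hp ↦ ?_⟩
  · have hk : 0 ≤ Δb / (b * Δt) := by positivity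
    rw [mul_div_assoc] at hx₀ hlow hhigh
    have hmem := mk_mem_feasibleSet hb (by positivity) hx₀T
      (hx₀ ▸ mul_sqrt_mul_le_of_sq_mul_le hk hN.le hlow)
      (hx₀ ▸ le_mul_sqrt_mul_of_le_sq_mul (by positivity) hk hN.le hhigh)
    refine ⟨_, hmem, ?_⟩
    have := excess _ hmem
    rw [sub_self, zero_pow two_ne_zero, mul_zero, zero_div] at this
    linarith
  · rintro _ ⟨p, hp, rfl⟩
    have hnonneg : 0 ≤ Δt * (p.1 - x₀) ^ 2 / p.1 := by have := hp.1; positivity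
    linarith [excess p hp]
  · have hpos : 0 < Δt * (p.1 - x₀) ^ 2 / p.1 :=
      div_pos (mul_pos hΔt (sq_pos_of_neg (by linarith [hp.2.1]))) hp.1
    linarith [excess p hp]

/-- Let `x₀ = √(N·Δb/(b·Δt))`. If `x₀ ≤ T̃` (and
`a²·Δb/(b·Δt) ≤ N ≤ (a + b·B̃)²·Δb/(b·Δt)`), then the minimum of `c` over
`F` equals the unconstrained minimum `2·√(N·Δt·Δb/b) − a·Δb/b`; if instead
`x₀ > T̃`, then the constrained minimum of `c` over `F` is strictly larger
than `2·√(N·Δt·Δb/b) − a·Δb/b`. -/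
theorem constrained_vs_unconstrained_minimum
    (Δt Δb a b N T B : ℝ) (hΔt : 0 < Δt) (hΔb : 0 < Δb)
    (ha : 0 < a) (hb : 0 < b) (hN : 0 < N) (hT : 0 < T) (hB : 0 < B)
    (hne : (feasibleSet a b N T B).Nonempty) :
    ((Real.sqrt (N * Δb / (b * Δt)) ≤ T →
      a ^ 2 * Δb / (b * Δt) ≤ N →
      N ≤ (a + b * B) ^ 2 * Δb / (b * Δt) →
      IsLeast (resourceCost Δt Δb '' feasibleSet a b N T B)
        (2 * Real.sqrt (N * Δt * Δb / b) - a * Δb / b)) ∧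
     (T < Real.sqrt (N * Δb / (b * Δt)) →
      ∀ p ∈ feasibleSet a b N T B,
        2 * Real.sqrt (N * Δt * Δb / b) - a * Δb / b
          < resourceCost Δt Δb p)) :=
  constrained_vs_unconstrained_minimum_general Δt Δb a b N T B hΔt hΔb ha hb hN hB
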